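/- arXiv:1611.02093 — 6 statements merged into one kernel-verified Lean document; each statement's English description precedes it below -/
import Mathlib

section
/- Let G = P_3 be the path on 3 vertices with endpoints u = 1 and v = 3, and let the potential be q = (0, c, 0) for a real number c. Then there exists a time T ∈ ℝ at which perfect state transfer occurs from u to v if and only if there exist integers k and ℓ of opposite parity (one even, one odd) such that (k² − ℓ²)·c² = 8·ℓ². -/
open Matrix

/-- Adjacency matrix of the path on `n` vertices. -/
def pathAdj (n : ℕ) : Matrix (Fin n) (Fin n) ℝ :=
  Matrix.of fun j k => if (j : ℕ) + 1 = (k : ℕ) ∨ (k : ℕ) + 1 = (j : ℕ) then 1 else 0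

/-- Hamiltonian of the path on `n` vertices with potential `q`. -/
def pathHam (n : ℕ) (q : Fin n → ℝ) : Matrix (Fin n) (Fin n) ℝ :=
  pathAdj n + Matrix.diagonal q

/-- Perfect state transfer from `u` to `v` at time `T` for real Hamiltonian `H`. -/
noncomputable def pst {ι : Type*} [Fintype ι] [DecidableEq ι]
    (H : Matrix ι ι ℝ) (u v : ι) (T : ℝ) : Prop :=
  ‖NormedSpace.exp ((Complex.I * (T : ℂ)) • H.map (Complex.ofReal)) u v‖ = 1

/-
The Hamiltonian `H = A + diag(0, c, 0)` of `P₃` has the antisymmetric eigenvector `(1, 0, -1)`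
with eigenvalue `0` and the symmetric eigenvectors `(1, λ, 1)` for the two roots
`λ± = (c ± d)/2` of `λ² = cλ + 2`, where `d = √(c² + 8)`. Diagonalising gives
`exp(iTH)₀₂ = p e^{iTλ₊} + q e^{iTλ₋} - 1/2` with `p, q > 0` and `p + q = 1/2`, and by strict
convexity of the unit disc this has modulus `1` exactly when `e^{iTλ±} = -1`, i.e. when both
`Tλ±` are odd multiples of `π`. Writing `Tc = 2lπ` and `Td = 2kπ`, this amounts to `kc = ld`
with `k + l` odd, and squaring (with the sign of `k` free) gives `(k² - l²)c² = 8l²`.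
-/

open Complex
open scoped Real

theorem eq_of_norm_combo_eq {E : Type*} [NormedAddCommGroup E] [NormedSpace ℝ E]
    [StrictConvexSpace ℝ E] {x y : E} {r a b : ℝ} (hx : ‖x‖ ≤ r) (hy : ‖y‖ ≤ r)
    (ha : 0 < a) (hb : 0 < b) (hab : a + b = 1) (h : ‖a • x + b • y‖ = r) : x = y :=
  by_contra fun hne => (norm_combo_lt_of_ne hx hy hne ha hb hab).ne h

theorem norm_mul_add_mul_sub_half_eq_one_iff {p q : ℝ} (hp : 0 < p) (hq : 0 < q)
    (hpq : p + q = 1 / 2) {u v : ℂ} (hu : ‖u‖ = 1) (hv : ‖v‖ = 1) :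
    ‖p * u + q * v - 1 / 2‖ = 1 ↔ u = -1 ∧ v = -1 := by
  constructor
  · intro h
    set w : ℂ := (2 * p) • -u + (2 * q) • -v with hw_def
    have hw : ‖w‖ ≤ 1 := by
      calc ‖w‖ ≤ ‖(2 * p) • -u‖ + ‖(2 * q) • -v‖ := norm_add_le _ _
        _ = 1 := by
          rw [norm_smul, norm_smul, norm_neg, norm_neg, hu, hv, Real.norm_of_nonneg (by positivity),
            Real.norm_of_nonneg (by positivity)]
          linarith
    -- `-(p u + q v - 1/2)` is the midpoint of `1` and `w`, both in the closed unit disc.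
    have hw1 : w = 1 := by
      have hz : (1 / 2 : ℝ) • w + (1 / 2 : ℝ) • (1 : ℂ) = -(p * u + q * v - 1 / 2) := by
        simp only [hw_def, Complex.real_smul]
        push_cast
        ring
      refine eq_of_norm_combo_eq hw norm_one.le one_half_pos one_half_pos (add_halves 1) ?_
      rw [hz, norm_neg, h]
    have huv : -u = -v := by
      refine eq_of_norm_combo_eq (a := 2 * p) (b := 2 * q) (by rw [norm_neg, hu])
        (by rw [norm_neg, hv]) (by positivity) (by positivity) (by linarith) ?_
      rw [← hw_def, hw1, norm_one]
    have hu1 : -u = 1 := by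
      rw [← hw1, hw_def, ← huv, ← add_smul]
      simp [show 2 * p + 2 * q = 1 by linarith]
    constructor
    · linear_combination -hu1
    · linear_combination -hu1 + huv
  · rintro ⟨rfl, rfl⟩
    rw [show (p : ℂ) * -1 + q * -1 - 1 / 2 = -((p + q : ℝ) + 1 / 2 : ℂ) by push_cast; ring, hpq]
    norm_num

theorem Complex.exp_ofReal_mul_I_eq_neg_one_iff (θ : ℝ) :
    exp (θ * I) = -1 ↔ ∃ m : ℤ, Odd m ∧ θ = m * π := by
  rw [← exp_pi_mul_I, exp_eq_exp_iff_exists_int]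
  constructor
  · rintro ⟨n, hn⟩
    refine ⟨2 * n + 1, odd_two_mul_add_one n, ?_⟩
    have h : ((θ - (2 * n + 1) * π : ℝ) : ℂ) * I = 0 := by push_cast; linear_combination hn
    have := ofReal_eq_zero.mp ((mul_eq_zero.mp h).resolve_right I_ne_zero)
    push_cast
    linarith
  · rintro ⟨m, ⟨n, rfl⟩, rfl⟩
    exact ⟨n, by push_cast; ring⟩

theorem Matrix.exp_conj_diagonal {m 𝔸 : Type*} [Fintype m] [DecidableEq m] [NormedCommRing 𝔸]
    [NormedAlgebra ℚ 𝔸] [CompleteSpace 𝔸] {P Q : Matrix m m 𝔸} (hPQ : P * Q = 1) (d : m → 𝔸) :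
    NormedSpace.exp (P * diagonal d * Q) = P * diagonal (NormedSpace.exp d) * Q := by
  have hQ : P⁻¹ = Q := inv_eq_right_inv hPQ
  have hP : IsUnit P := (isUnit_iff_isUnit_det P).mpr (isUnit_det_of_right_inverse hPQ)
  rw [← hQ, exp_conj _ _ hP, exp_diagonal]

def p3Ham (c : ℂ) : Matrix (Fin 3) (Fin 3) ℂ := !![0, 1, 0; 1, c, 1; 0, 1, 0]

section EigenbasisP3

variable (R S : ℂ)

def p3Eigenbasis : Matrix (Fin 3) (Fin 3) ℂ := !![1, 1, 1; R, 0, S; 1, -1, 1]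

noncomputable def p3EigenbasisInv : Matrix (Fin 3) (Fin 3) ℂ :=
  (2 * (R - S))⁻¹ • !![-S, 2, -S; R - S, 0, S - R; R, -2, R]

variable {R S}

theorem p3Eigenbasis_mul_inv (h : R ≠ S) : p3Eigenbasis R S * p3EigenbasisInv R S = 1 := by
  have hP : p3Eigenbasis R S * !![-S, 2, -S; R - S, 0, S - R; R, -2, R] = (2 * (R - S)) • 1 := by
    ext i j
    fin_cases i <;> fin_cases j <;> simp [p3Eigenbasis, mul_apply, Fin.sum_univ_three] <;> ring
  rw [p3EigenbasisInv, mul_smul_comm, hP, smul_smul,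
    inv_mul_cancel₀ (mul_ne_zero two_ne_zero (sub_ne_zero.mpr h)), one_smul]

theorem p3Ham_mul_eigenbasis {c : ℂ} (hsum : R + S = c) (hprod : R * S = -2) :
    p3Ham c * p3Eigenbasis R S = p3Eigenbasis R S * diagonal ![R, 0, S] := by
  subst hsum
  ext i j
  fin_cases i <;> fin_cases j <;> simp [p3Ham, p3Eigenbasis, mul_apply, Fin.sum_univ_three] <;>
    linear_combination hprod

end EigenbasisP3

theorem exp_smul_p3Ham_apply_zero_two {c R S : ℂ} (hsum : R + S = c) (hprod : R * S = -2)
    (hRS : R ≠ S) (z : ℂ) :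
    NormedSpace.exp (z • p3Ham c) 0 2 =
      -S / (2 * (R - S)) * exp (z * R) + R / (2 * (R - S)) * exp (z * S) - 1 / 2 := by
  have hconj : z • p3Ham c =
      p3Eigenbasis R S * diagonal ![z * R, 0, z * S] * p3EigenbasisInv R S := by
    calc z • p3Ham c
        = z • (p3Ham c * p3Eigenbasis R S * p3EigenbasisInv R S) := by
          rw [mul_assoc, p3Eigenbasis_mul_inv hRS, mul_one]
      _ = p3Eigenbasis R S * (z • diagonal ![R, 0, S]) * p3EigenbasisInv R S := by
          rw [p3Ham_mul_eigenbasis hsum hprod, Matrix.mul_smul, Matrix.smul_mul]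
      _ = p3Eigenbasis R S * diagonal ![z * R, 0, z * S] * p3EigenbasisInv R S := by
          rw [← diagonal_smul]
          simp
  rw [hconj, exp_conj_diagonal (p3Eigenbasis_mul_inv hRS)]
  simp only [mul_apply, Fin.sum_univ_three]
  simp [p3Eigenbasis, p3EigenbasisInv, ← Complex.exp_eq_exp_ℂ]
  field_simp
  ring

theorem pathHam_three_map_ofReal (c : ℝ) :
    (pathHam 3 ![0, c, 0]).map ofReal = p3Ham c := by
  ext i j
  fin_cases i <;> fin_cases j <;> simp [pathHam, pathAdj, p3Ham]

theorem pst_pathHam_three_iff {c d : ℝ} (hd : 0 < d) (hd2 : d ^ 2 = c ^ 2 + 8) (T : ℝ) :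
    pst (pathHam 3 ![0, c, 0]) 0 2 T ↔
      exp ((T * ((c + d) / 2) : ℝ) * I) = -1 ∧ exp ((T * ((c - d) / 2) : ℝ) * I) = -1 := by
  obtain ⟨hc_lt, hc_gt⟩ := abs_lt.mp (abs_lt_of_sq_lt_sq (by linarith : c ^ 2 < d ^ 2) hd.le)
  have hd2' : (d : ℂ) ^ 2 = c ^ 2 + 8 := by exact_mod_cast hd2
  have hentry := exp_smul_p3Ham_apply_zero_two (R := ((c + d) / 2 : ℝ)) (S := ((c - d) / 2 : ℝ))
    (by push_cast; ring) (by push_cast; linear_combination (-1 / 4 : ℂ) * hd2')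
    (by norm_cast; linarith) (I * T)
  have hexp (x : ℝ) : I * T * (x : ℂ) = ((T * x : ℝ) : ℂ) * I := by push_cast; ring
  rw [pst, pathHam_three_map_ofReal, hentry, hexp, hexp]
  simp only [← ofReal_neg, ← ofReal_sub, ← ofReal_ofNat, ← ofReal_mul, ← ofReal_div]
  exact norm_mul_add_mul_sub_half_eq_one_iff (div_pos (by linarith) (by linarith))
    (div_pos (by linarith) (by linarith)) (by field_simp [hd.ne']; ring)
    (norm_exp_ofReal_mul_I _) (norm_exp_ofReal_mul_I _)

theorem exists_odd_pi_multiples_iff {c d : ℝ} (hd : d ≠ 0) :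
    (∃ T : ℝ, (∃ m : ℤ, Odd m ∧ T * ((c + d) / 2) = m * π) ∧
        ∃ n : ℤ, Odd n ∧ T * ((c - d) / 2) = n * π) ↔
      ∃ k l : ℤ, Odd (k + l) ∧ k * c = l * d := by
  constructor
  · rintro ⟨T, ⟨m, ⟨a, rfl⟩, hm⟩, n, ⟨b, rfl⟩, hn⟩
    have hT : T ≠ 0 := by
      rintro rfl
      have : ((2 * a + 1 : ℤ) : ℝ) = 0 := by
        simpa [Real.pi_ne_zero] using hm.symm
      norm_cast at this
      omega
    refine ⟨a - b, a + b + 1, ⟨a, by ring⟩, mul_left_cancel₀ hT ?_⟩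
    push_cast at hm hn ⊢
    linear_combination (a - b) * (hm + hn) - (a + b + 1) * (hm - hn)
  · rintro ⟨k, l, hkl, h⟩
    refine ⟨2 * k * π / d, ⟨l + k, by rwa [add_comm], ?_⟩,
      l - k, Int.odd_sub'.mpr (Int.odd_add.mp hkl), ?_⟩ <;>
    · field_simp
      push_cast
      linear_combination h

theorem exists_odd_add_mul_eq_iff {c d : ℝ} (hd2 : d ^ 2 = c ^ 2 + 8) :
    (∃ k l : ℤ, Odd (k + l) ∧ k * c = l * d) ↔
      ∃ k l : ℤ, ((Even k ∧ Odd l) ∨ (Odd k ∧ Even l)) ∧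
        ((k : ℝ) ^ 2 - (l : ℝ) ^ 2) * c ^ 2 = 8 * (l : ℝ) ^ 2 := by
  have hparity : ∀ k l : ℤ, Odd (k + l) ↔ (Even k ∧ Odd l) ∨ (Odd k ∧ Even l) := by
    intro k l
    rw [Int.odd_add, ← Int.not_even_iff_odd, ← Int.not_even_iff_odd]
    tauto
  have hsq : ∀ k l : ℤ, ((k : ℝ) ^ 2 - (l : ℝ) ^ 2) * c ^ 2 = 8 * (l : ℝ) ^ 2 ↔
      (k * c) ^ 2 = (l * d) ^ 2 := by
    intro k l
    constructor <;> intro h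
    · linear_combination h - (l : ℝ) ^ 2 * hd2
    · linear_combination h + (l : ℝ) ^ 2 * hd2
  simp_rw [← hparity, hsq, sq_eq_sq_iff_eq_or_eq_neg]
  constructor
  · rintro ⟨k, l, hkl, h⟩
    exact ⟨k, l, hkl, Or.inl h⟩
  · rintro ⟨k, l, hkl, h | h⟩
    · exact ⟨k, l, hkl, h⟩
    · refine ⟨-k, l, by rwa [neg_add_eq_sub, Int.odd_sub', ← Int.odd_add], ?_⟩
      push_cast
      linarith

/-- On the path `P₃` with potential `(0, c, 0)`, perfect state transfer between
the endpoints occurs at some time iff there are integers `k, ℓ` of opposite parity with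
`(k² − ℓ²)·c² = 8·ℓ²`. -/
theorem pst_P3_iff (c : ℝ) :
    (∃ T : ℝ, pst (pathHam 3 ![0, c, 0]) 0 2 T) ↔
      ∃ k l : ℤ, ((Even k ∧ Odd l) ∨ (Odd k ∧ Even l)) ∧
        ((k : ℝ) ^ 2 - (l : ℝ) ^ 2) * c ^ 2 = 8 * (l : ℝ) ^ 2 := by
  obtain ⟨d, hd, hd2⟩ : ∃ d : ℝ, 0 < d ∧ d ^ 2 = c ^ 2 + 8 :=
    ⟨√(c ^ 2 + 8), by positivity, Real.sq_sqrt (by positivity)⟩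
  simp_rw [pst_pathHam_three_iff hd hd2, exp_ofReal_mul_I_eq_neg_one_iff]
  rw [exists_odd_pi_multiples_iff hd.ne', exists_odd_add_mul_eq_iff hd2]
end

section
/- Let G_1 and G_2 be finite simple graphs with potentials q_1 : V(G_1) → ℝ and q_2 : V(G_2) → ℝ. Suppose perfect state transfer occurs from u to v at time T in G_1 (with potential q_1) and from x to y at the same time T in G_2 (with potential q_2). Then in the Cartesian product G_1 □ G_2, equipped with the potential q defined by q((a,b)) = q_1(a) + q_2(b), perfect state transfer occurs from (u,x) to (v,y) at time T. -/
open Matrix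

open SimpleGraph in
instance boxProdAdjDecidable {α β : Type*} [DecidableEq α] [DecidableEq β]
    (G : SimpleGraph α) (H : SimpleGraph β) [DecidableRel G.Adj] [DecidableRel H.Adj] :
    DecidableRel (G □ H).Adj :=
  fun _ _ => decidable_of_iff _ SimpleGraph.boxProd_adj.symm


/-!
The Hamiltonian of `G₁ □ G₂` with potential `q₁ a + q₂ b` is the Kronecker sum
`H₁ ⊗ 1 + 1 ⊗ H₂` of the two factor Hamiltonians. Its two summands commute, so
`exp (i T H) = exp (i T H₁) ⊗ exp (i T H₂)`, and the `((u, x), (v, y))` entry of the right-hand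
side is the product of the two transfer amplitudes, each of modulus one.
-/

open scoped Kronecker

namespace Matrix

variable {m n α : Type*} [DecidableEq m] [DecidableEq n]

def kroneckerSum [NonAssocSemiring α] (A : Matrix m m α) (B : Matrix n n α) :
    Matrix (m × n) (m × n) α :=
  A ⊗ₖ 1 + 1 ⊗ₖ B

theorem kroneckerSum_add [NonAssocSemiring α] (A A' : Matrix m m α) (B B' : Matrix n n α) :
    kroneckerSum (A + A') (B + B') = kroneckerSum A B + kroneckerSum A' B' := by
  simp only [kroneckerSum, add_kronecker, kronecker_add]
  abel

theorem smul_kroneckerSum [CommSemiring α] (c : α) (A : Matrix m m α) (B : Matrix n n α) :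
    c • kroneckerSum A B = kroneckerSum (c • A) (c • B) := by
  simp only [kroneckerSum, smul_add, smul_kronecker, kronecker_smul]

theorem kroneckerSum_map {β : Type*} [NonAssocSemiring α] [NonAssocSemiring β] (f : α →+* β)
    (A : Matrix m m α) (B : Matrix n n α) :
    (kroneckerSum A B).map f = kroneckerSum (A.map f) (B.map f) := by
  ext ⟨i, k⟩ ⟨j, l⟩
  simp [kroneckerSum, one_apply, apply_ite f]

theorem diagonal_add_eq_kroneckerSum [NonAssocSemiring α] (a : m → α) (b : n → α) :
    diagonal (fun p : m × n => a p.1 + b p.2) = kroneckerSum (diagonal a) (diagonal b) := by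
  simp only [kroneckerSum, ← diagonal_one, diagonal_kronecker_diagonal, diagonal_add]
  simp

section Exp

open NormedSpace

variable [Fintype m] [Fintype n] {𝔸 : Type*} [NormedRing 𝔸] [CompleteSpace 𝔸]

open scoped Norms.Operator in
/-- Instance search does not find this: the operator-norm uniformity agrees with the product
uniformity only after unfolding instances. -/
theorem completeSpace_linftyOp : @CompleteSpace (Matrix m m 𝔸) PseudoMetricSpace.toUniformSpace :=
  (inferInstance : CompleteSpace (m → m → 𝔸))

variable [NormedAlgebra ℚ 𝔸]

open scoped Norms.Operator in
theorem exp_reindex (e : m ≃ n) (A : Matrix m m 𝔸) : exp (reindex e e A) = reindex e e (exp A) :=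
  have := completeSpace_linftyOp (m := m) (𝔸 := 𝔸)
  (map_exp (reindexRingEquiv 𝔸 e) (continuous_id.matrix_reindex e e) A).symm

open scoped Norms.Operator in
theorem exp_blockDiagonal_const (A : Matrix m m 𝔸) :
    exp (blockDiagonal fun _ : n => A) = blockDiagonal fun _ => exp A := by
  have := completeSpace_linftyOp (m := m) (𝔸 := 𝔸)
  rw [exp_blockDiagonal]
  exact congrArg blockDiagonal (Pi.exp_def (𝔸 := fun _ : n => Matrix m m 𝔸) _)

theorem exp_kronecker_one (A : Matrix m m 𝔸) : exp (A ⊗ₖ (1 : Matrix n n 𝔸)) = exp A ⊗ₖ 1 := by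
  rw [kronecker_one, kronecker_one, exp_blockDiagonal_const]

theorem exp_one_kronecker (B : Matrix n n 𝔸) : exp ((1 : Matrix m m 𝔸) ⊗ₖ B) = 1 ⊗ₖ exp B := by
  rw [one_kronecker, one_kronecker, exp_reindex, exp_blockDiagonal_const]

end Exp

theorem exp_kroneckerSum [Fintype m] [Fintype n] {𝔸 : Type*} [NormedCommRing 𝔸]
    [NormedAlgebra ℚ 𝔸] [CompleteSpace 𝔸] (A : Matrix m m 𝔸) (B : Matrix n n 𝔸) :
    NormedSpace.exp (kroneckerSum A B) = NormedSpace.exp A ⊗ₖ NormedSpace.exp B := by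
  have hcomm : Commute (A ⊗ₖ (1 : Matrix n n 𝔸)) ((1 : Matrix m m 𝔸) ⊗ₖ B) := by
    simp only [Commute, SemiconjBy, ← mul_kronecker_mul, mul_one, one_mul]
  rw [kroneckerSum, exp_add_of_commute _ _ hcomm, exp_kronecker_one, exp_one_kronecker,
    ← mul_kronecker_mul, mul_one, one_mul]

end Matrix

theorem SimpleGraph.adjMatrix_boxProd {V₁ V₂ R : Type*} [DecidableEq V₁] [DecidableEq V₂]
    [NonAssocSemiring R] (G₁ : SimpleGraph V₁) (G₂ : SimpleGraph V₂)
    [DecidableRel G₁.Adj] [DecidableRel G₂.Adj] :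
    (G₁ □ G₂).adjMatrix R = kroneckerSum (G₁.adjMatrix R) (G₂.adjMatrix R) := by
  ext ⟨a, b⟩ ⟨c, d⟩
  by_cases hac : a = c <;> by_cases hbd : b = d <;>
    simp [kroneckerSum, one_apply, hac, hbd, SimpleGraph.boxProd_adj]

theorem pst_kroneckerSum {m n : Type*} [Fintype m] [DecidableEq m] [Fintype n] [DecidableEq n]
    {H₁ : Matrix m m ℝ} {H₂ : Matrix n n ℝ} {u v : m} {x y : n} {T : ℝ}
    (h₁ : pst H₁ u v T) (h₂ : pst H₂ x y T) : pst (kroneckerSum H₁ H₂) (u, x) (v, y) T := by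
  have hmap : (kroneckerSum H₁ H₂).map Complex.ofReal =
      kroneckerSum (H₁.map Complex.ofReal) (H₂.map Complex.ofReal) :=
    kroneckerSum_map Complex.ofRealHom H₁ H₂
  unfold pst at *
  rw [hmap, smul_kroneckerSum, exp_kroneckerSum, kronecker_apply, norm_mul, h₁, h₂, one_mul]

open SimpleGraph in
/-- If perfect state transfer occurs from `u` to `v` at time `T` in `G₁` with
potential `q₁`, and from `x` to `y` at the same time `T` in `G₂` with potential `q₂`, then
in the Cartesian product `G₁ □ G₂` with potential `q(a,b) = q₁(a) + q₂(b)`, perfect state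
transfer occurs from `(u,x)` to `(v,y)` at time `T`. -/
theorem pst_boxProd {V₁ V₂ : Type*} [Fintype V₁] [DecidableEq V₁] [Fintype V₂] [DecidableEq V₂]
    (G₁ : SimpleGraph V₁) (G₂ : SimpleGraph V₂) [DecidableRel G₁.Adj] [DecidableRel G₂.Adj]
    (q₁ : V₁ → ℝ) (q₂ : V₂ → ℝ) (u v : V₁) (x y : V₂) (T : ℝ)
    (h₁ : pst (G₁.adjMatrix ℝ + Matrix.diagonal q₁) u v T)
    (h₂ : pst (G₂.adjMatrix ℝ + Matrix.diagonal q₂) x y T) :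
    pst ((G₁ □ G₂).adjMatrix ℝ +
        Matrix.diagonal (fun p : V₁ × V₂ => q₁ p.1 + q₂ p.2))
      (u, x) (v, y) T := by
  rw [adjMatrix_boxProd, diagonal_add_eq_kroneckerSum, ← kroneckerSum_add]
  exact pst_kroneckerSum h₁ h₂
end

section
/- Let H be an n×n real symmetric matrix and u, v two indices. Suppose there is an orthonormal basis x_1,…,x_n of ℝ^n consisting of eigenvectors of H with eigenvalues λ_1,…,λ_n, such that for every i either x_i(u) = x_i(v) or x_i(u) = −x_i(v). Suppose further there exist T ∈ ℝ and θ ∈ ℝ such that for every i with x_i(u) ≠ 0: exp(i·T·λ_i) = exp(i·θ) whenever x_i(u) = x_i(v), and exp(i·T·λ_i) = −exp(i·θ) whenever x_i(u) = −x_i(v). Then perfect state transfer occurs from u to v at time T, i.e. |exp(i·T·H)_{u,v}| = 1. -/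
open Matrix

/-!
The orthonormal eigenvectors are the rows of an orthogonal matrix `P` with `H = Pᵀ diag(λ) P`,
so the `(u, v)` entry of `exp(iTH)` is `∑ i, exp(iTλᵢ) xᵢ(u) xᵢ(v)`. The phase conditions turn
every term into `exp(iθ) xᵢ(u)²`, and the columns of `P` are unit vectors, so the sum is `exp(iθ)`.
-/

variable {ι R : Type*} [Fintype ι] [DecidableEq ι]

namespace Matrix

theorem of_mul_transpose_self_eq_one [NonAssocSemiring R] {x : ι → ι → R}
    (hx : ∀ i j, x i ⬝ᵥ x j = if i = j then 1 else 0) : of x * (of x)ᵀ = 1 := by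
  ext i j
  simpa [mul_apply, one_apply, dotProduct] using hx i j

theorem eq_transpose_mul_diagonal_mul [CommRing R] {H P : Matrix ι ι R} {d : ι → R}
    (hP : P * Pᵀ = 1) (heig : ∀ i, H *ᵥ P i = d i • P i) : H = Pᵀ * diagonal d * P := by
  have hHP : H * Pᵀ = Pᵀ * diagonal d := by
    ext j i
    rw [mul_diagonal]
    simpa [mul_apply, mulVec, dotProduct, mul_comm] using congr_fun (heig i) j
  rw [← hHP, mul_assoc, mul_eq_one_comm.mp hP, mul_one]

theorem transpose_mul_diagonal_mul_apply [CommSemiring R] (P : Matrix ι ι R) (d : ι → R)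
    (u v : ι) : (Pᵀ * diagonal d * P) u v = ∑ i, d i * P i u * P i v := by
  simp only [mul_apply (M := Pᵀ * diagonal d), mul_diagonal, transpose_apply]
  exact Finset.sum_congr rfl fun i _ => by ring

theorem exp_transpose_mul_diagonal_mul {𝕂 : Type*} [RCLike 𝕂] {P : Matrix ι ι 𝕂}
    (hP : Pᵀ * P = 1) (d : ι → 𝕂) :
    NormedSpace.exp (Pᵀ * diagonal d * P) = Pᵀ * diagonal (fun i => NormedSpace.exp (d i)) * P := by
  rw [← inv_eq_left_inv hP, exp_conj' P _ (.of_mul_eq_one_right _ hP), exp_diagonal, Pi.exp_def]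

theorem exp_I_mul_smul_map_ofReal_apply {H P : Matrix ι ι ℝ} {d : ι → ℝ} (hP : P * Pᵀ = 1)
    (heig : ∀ i, H *ᵥ P i = d i • P i) (t : ℝ) (u v : ι) :
    NormedSpace.exp ((Complex.I * t) • H.map Complex.ofReal) u v
      = ∑ i, Complex.exp (Complex.I * t * d i) * P i u * P i v := by
  have map_ofReal_mul (A B : Matrix ι ι ℝ) :
      (A * B).map Complex.ofReal = A.map Complex.ofReal * B.map Complex.ofReal :=
    Matrix.map_mul (f := Complex.ofRealHom)
  set Q := P.map Complex.ofReal
  have hQ : Qᵀ * Q = 1 := by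
    rw [← transpose_map, ← map_ofReal_mul, mul_eq_one_comm.mp hP,
      Matrix.map_one _ Complex.ofReal_zero Complex.ofReal_one]
  have hH : (Complex.I * t) • H.map Complex.ofReal
      = Qᵀ * diagonal (fun i => Complex.I * t * d i) * Q := by
    rw [eq_transpose_mul_diagonal_mul hP heig, map_ofReal_mul, map_ofReal_mul, transpose_map,
      diagonal_map Complex.ofReal_zero, ← Matrix.smul_mul, ← Matrix.mul_smul, ← diagonal_smul]
    rfl
  rw [hH, exp_transpose_mul_diagonal_mul hQ, transpose_mul_diagonal_mul_apply]
  simp [Q, Complex.exp_eq_exp_ℂ]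

end Matrix

theorem pst_of_eigenvector_conditions_general (n : ℕ) (H : Matrix (Fin n) (Fin n) ℝ)
    (u v : Fin n)
    (x : Fin n → (Fin n → ℝ)) (lam : Fin n → ℝ)
    (heig : ∀ i, H.mulVec (x i) = lam i • x i)
    (hortho : ∀ i j, x i ⬝ᵥ x j = if i = j then (1 : ℝ) else 0)
    (hsym : ∀ i, x i u = x i v ∨ x i u = - x i v)
    (T θ : ℝ)
    (hphase : ∀ i, x i u ≠ 0 →
      (x i u = x i v →
        Complex.exp (Complex.I * (T : ℂ) * (lam i : ℂ)) = Complex.exp (Complex.I * (θ : ℂ))) ∧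
      (x i u = - x i v →
        Complex.exp (Complex.I * (T : ℂ) * (lam i : ℂ)) = - Complex.exp (Complex.I * (θ : ℂ)))) :
    pst H u v T := by
  have hP : of x * (of x)ᵀ = 1 := of_mul_transpose_self_eq_one hortho
  have hcol : ∑ i, (x i u : ℂ) ^ 2 = 1 := by
    have h : ((of x)ᵀ * of x) u u = 1 := by rw [mul_eq_one_comm.mp hP, one_apply_eq]
    simp only [mul_apply, transpose_apply, of_apply, ← sq] at h
    exact_mod_cast h
  have hterm (i : Fin n) : Complex.exp (Complex.I * T * lam i) * x i u * x i v
      = Complex.exp (Complex.I * θ) * x i u ^ 2 := by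
    rcases eq_or_ne (x i u) 0 with h0 | h0
    · simp [h0]
    rcases hsym i with h | h
    · rw [(hphase i h0).1 h, ← h]; ring
    · rw [(hphase i h0).2 h, h]; push_cast; ring
  rw [pst, exp_I_mul_smul_map_ofReal_apply hP heig]
  simp only [of_apply]
  rw [Finset.sum_congr rfl fun i _ => hterm i, ← Finset.mul_sum, hcol, mul_one, mul_comm,
    Complex.norm_exp_ofReal_mul_I]

/-- sufficient spectral condition for perfect state transfer. -/
theorem pst_of_eigenvector_conditions (n : ℕ) (H : Matrix (Fin n) (Fin n) ℝ)
    (hH : H.IsSymm) (u v : Fin n)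
    (x : Fin n → (Fin n → ℝ)) (lam : Fin n → ℝ)
    (heig : ∀ i, H.mulVec (x i) = lam i • x i)
    (hortho : ∀ i j, x i ⬝ᵥ x j = if i = j then (1 : ℝ) else 0)
    (hsym : ∀ i, x i u = x i v ∨ x i u = - x i v)
    (T θ : ℝ)
    (hphase : ∀ i, x i u ≠ 0 →
      (x i u = x i v →
        Complex.exp (Complex.I * (T : ℂ) * (lam i : ℂ)) = Complex.exp (Complex.I * (θ : ℂ))) ∧
      (x i u = - x i v →
        Complex.exp (Complex.I * (T : ℂ) * (lam i : ℂ)) = - Complex.exp (Complex.I * (θ : ℂ)))) :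
    pst H u v T :=
  pst_of_eigenvector_conditions_general n H u v x lam heig hortho hsym T θ hphase
end

section
/- Let H be an n×n real symmetric matrix and u, v two indices, and suppose perfect state transfer occurs from u to v at some time T ∈ ℝ. Then every real eigenvector x of H satisfies x(u) = x(v) or x(u) = −x(v). -/
open Matrix

open NormedSpace

/-!
Since `H` is real symmetric, `U = exp (i T H)` is unitary, so the row `u` of `U` has unit
Euclidean norm; perfect state transfer says that its entry `U u v` already has modulus one, hence
all other entries of that row vanish and `(U x) u = U u v * x v`. On the other hand a real
eigenvector `x` of `H` with eigenvalue `λ` satisfies `U x = exp (i T λ) x`, so comparing moduli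
gives `|x u| = |x v|`.
-/

namespace Matrix

variable {n 𝕜 : Type*} [Fintype n] [DecidableEq n] [RCLike 𝕜]

theorem exp_mulVec_of_mulVec_eq_smul {A : Matrix n n 𝕜} {y : n → 𝕜} {c : 𝕜}
    (h : A *ᵥ y = c • y) : exp A *ᵥ y = exp c • y := by
  -- Every column of `P` is `y`, so the eigen-equation reads `P * (c • 1) = A * P`, and
  -- semiconjugation passes to exponentials.
  set P : Matrix n n 𝕜 := of fun i _ => y i
  have mul_P (B : Matrix n n 𝕜) (i j : n) : (B * P) i j = (B *ᵥ y) i := rfl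
  have hP : SemiconjBy P (algebraMap 𝕜 _ c) A := by
    ext i j
    rw [Algebra.algebraMap_eq_smul_one, Matrix.mul_smul, mul_one, mul_P, h]
    rfl
  have hexpP : SemiconjBy P (algebraMap 𝕜 _ (exp c)) (exp A) := by
    open scoped Norms.Operator in
    rw [algebraMap_exp_comm]
    exact hP.exp_right
  rw [SemiconjBy, Algebra.algebraMap_eq_smul_one, Matrix.mul_smul, mul_one] at hexpP
  ext i
  rw [← mul_P _ i i, ← hexpP]
  rfl

theorem exp_mem_unitaryGroup_of_mem_skewAdjoint {A : Matrix n n 𝕜}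
    (hA : A ∈ skewAdjoint (Matrix n n 𝕜)) : exp A ∈ unitaryGroup n 𝕜 := by
  rw [mem_unitaryGroup_iff', star_eq_conjTranspose, ← exp_conjTranspose, ← star_eq_conjTranspose,
    skewAdjoint.mem_iff.mp hA, ← exp_add_of_commute _ _ (Commute.refl A).neg_left, neg_add_cancel,
    exp_zero]

theorem sum_norm_sq_row_of_mem_unitaryGroup {U : Matrix n n 𝕜} (hU : U ∈ unitaryGroup n 𝕜)
    (i : n) : ∑ k, ‖U i k‖ ^ 2 = 1 := by
  have hdiag := congrFun (congrFun (mem_unitaryGroup_iff.mp hU) i) i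
  simp only [mul_apply, star_apply, ← starRingEnd_apply, RCLike.mul_conj, one_apply_eq] at hdiag
  exact_mod_cast hdiag

theorem apply_eq_zero_of_norm_apply_eq_one {U : Matrix n n 𝕜} (hU : U ∈ unitaryGroup n 𝕜)
    {i j : n} (hij : ‖U i j‖ = 1) {k : n} (hk : k ≠ j) : U i k = 0 := by
  have hrest : ∑ l ∈ Finset.univ.erase j, ‖U i l‖ ^ 2 = 0 := by
    have := sum_norm_sq_row_of_mem_unitaryGroup hU i
    rw [← Finset.add_sum_erase _ _ (Finset.mem_univ j), hij] at this
    linarith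
  rw [Finset.sum_eq_zero_iff_of_nonneg fun l _ => sq_nonneg ‖U i l‖] at hrest
  simpa using hrest k (Finset.mem_erase.mpr ⟨hk, Finset.mem_univ k⟩)

theorem mulVec_apply_eq_of_norm_apply_eq_one {U : Matrix n n 𝕜} (hU : U ∈ unitaryGroup n 𝕜)
    {i j : n} (hij : ‖U i j‖ = 1) (y : n → 𝕜) : (U *ᵥ y) i = U i j * y j :=
  show ∑ k, U i k * y k = _ from Finset.sum_eq_single j
    (fun k _ hk => by rw [apply_eq_zero_of_norm_apply_eq_one hU hij hk, zero_mul])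
    (fun hj => absurd (Finset.mem_univ j) hj)

end Matrix

theorem eigenvector_symmetry_of_pst_general (n : ℕ) (H : Matrix (Fin n) (Fin n) ℝ)
    (hH : H.IsSymm) (u v : Fin n) (T : ℝ) (hpst : pst H u v T)
    (x : Fin n → ℝ) (lam : ℝ) (heig : H.mulVec x = lam • x) :
    x u = x v ∨ x u = - x v := by
  set M : Matrix (Fin n) (Fin n) ℂ := H.map Complex.ofReal
  set U := exp ((Complex.I * T) • M)
  set y : Fin n → ℂ := Complex.ofReal ∘ x
  have hUuv : ‖U u v‖ = 1 := hpst
  have hM : IsSelfAdjoint M :=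
    (isHermitian_iff_isSymm.mpr hH).map _ fun r => (Complex.conj_ofReal r).symm
  have hU : U ∈ unitaryGroup (Fin n) ℂ :=
    exp_mem_unitaryGroup_of_mem_skewAdjoint <|
      hM.smul_mem_skewAdjoint (by simp [skewAdjoint.mem_iff])
  have hMy : M *ᵥ y = (lam : ℂ) • y := by
    ext i
    refine (RingHom.map_mulVec Complex.ofRealHom H x i).symm.trans ?_
    simp [heig, y]
  have hUy : U *ᵥ y = exp (Complex.I * T * lam) • y :=
    exp_mulVec_of_mulVec_eq_smul (by rw [Matrix.smul_mulVec, hMy, smul_smul])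
  have hrow : U u v * y v = exp (Complex.I * T * lam) * y u := by
    rw [← mulVec_apply_eq_of_norm_apply_eq_one hU hUuv, hUy, Pi.smul_apply, smul_eq_mul]
  have hnorm : |x v| = |x u| := by
    simpa [y, hUuv, ← Complex.exp_eq_exp_ℂ, Complex.norm_exp] using congrArg norm hrow
  exact abs_eq_abs.mp hnorm.symm

/-- if perfect state transfer occurs from `u` to `v`, then every real
eigenvector `x` of `H` satisfies `x u = x v` or `x u = -x v`. -/
theorem eigenvector_symmetry_of_pst (n : ℕ) (H : Matrix (Fin n) (Fin n) ℝ)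
    (hH : H.IsSymm) (u v : Fin n) (T : ℝ) (hpst : pst H u v T)
    (x : Fin n → ℝ) (lam : ℝ) (hx : x ≠ 0) (heig : H.mulVec x = lam • x) :
    x u = x v ∨ x u = - x v :=
  eigenvector_symmetry_of_pst_general n H hH u v T hpst x lam heig
end

section
/- For n ≥ 1 and real numbers Q_1,…,Q_n, let L_{2n} = det(x·I_{2n} − H_{2n}) be the characteristic polynomial of the Hamiltonian H_{2n} of the path P_{2n} with symmetric potential (Q_1,…,Q_n,Q_n,…,Q_1). Then L_{2n}(x) = (p_n(x; Q_1,…,Q_{n−1},Q_n+1)) · (p_n(x; Q_1,…,Q_{n−1},Q_n−1)), equivalently L_{2n} = (p_n + p_{n−1})(p_n − p_{n−1}) where p_k = p_k(x; Q_1,…,Q_k). Moreover, the roots of p_n + p_{n−1} are eigenvalues of H_{2n} admitting eigenvectors f with f(1) = −f(2n) ≠ 0, and the roots of p_n − p_{n−1} are eigenvalues admitting eigenvectors f with f(1) = f(2n) ≠ 0. -/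
open Matrix

/-- `p_m(x; Q_1, …, Q_m) = det (x·I − H_m)`, the characteristic polynomial (evaluated at `x`)
of the Hamiltonian of the path on `m` vertices with potential `Q 0, …, Q (m-1)`. -/
noncomputable def pathCharFun (m : ℕ) (Q : ℕ → ℝ) (x : ℝ) : ℝ :=
  (x • (1 : Matrix (Fin m) (Fin m) ℝ) - pathHam m (fun i => Q i.val)).det

/-!
Read `Fin (2n)` as two copies of `Fin n`, the second one backwards from vertex `2n`. The symmetric
Hamiltonian becomes the block matrix `[[A, S], [S, A]]`, where `A = H_n` and `S` is the matrix unit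
linking the two middle vertices, so `det (x - H_{2n}) = det (x - (A + S)) * det (x - (A - S))`;
here `A ± S` is `H_n` with `Q_n` replaced by `Q_n ± 1`, and expanding along the last row shows
that this replacement turns `p_n` into `p_n ∓ p_{n-1}`. An eigenvector `g` of `A + σ S`
(`σ = ±1`) gives the eigenvector `(g, σ g)` of the block matrix, and `g` does not vanish at the
first vertex: otherwise the eigenvalue equations, read row by row, force `g = 0`.
-/

theorem Matrix.det_add_single_self {n R : Type*} [Fintype n] [DecidableEq n] [CommRing R]
    (M : Matrix n n R) (i : n) (c : R) :
    (M + single i i c).det = M.det + c * M.adjugate i i := by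
  have hrow : M + single i i c = M.updateRow i (M i + c • Pi.single i 1) := by
    ext j k
    by_cases hj : j = i
    · subst hj
      simp [single_apply, Pi.single_apply, eq_comm]
    · simp [hj, Ne.symm hj]
  rw [hrow, det_updateRow_add, updateRow_eq_self, det_updateRow_smul, adjugate_apply]

theorem Matrix.det_fromBlocks_self_swap {n R : Type*} [Fintype n] [DecidableEq n] [CommRing R]
    (A B : Matrix n n R) :
    (fromBlocks A B B A).det = (A + B).det * (A - B).det := by
  have hfactor : fromBlocks A B B A =
      fromBlocks 1 (-1) 0 1 * fromBlocks (A + B) 0 B (A - B) * fromBlocks 1 1 0 1 := by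
    simp only [fromBlocks_multiply]
    congr 1 <;> noncomm_ring
  simp [hfactor, det_fromBlocks_zero₁₂]

theorem Matrix.fromBlocks_mulVec_sum_elim_smul {n R : Type*} [Fintype n] [CommRing R]
    {A D : Matrix n n R} {σ lam : R} (hσ : σ * σ = 1) {g : n → R}
    (hg : (A + σ • D) *ᵥ g = lam • g) :
    fromBlocks A D D A *ᵥ Sum.elim g (σ • g) = lam • Sum.elim g (σ • g) := by
  rw [fromBlocks_mulVec, Sum.elim_comp_inl, Sum.elim_comp_inr, mulVec_smul, mulVec_smul]
  ext (i | i) <;>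
    have hgi := congrFun hg i <;>
    simp only [add_mulVec, smul_mulVec, Pi.add_apply, Pi.smul_apply, smul_eq_mul, Sum.elim_inl,
      Sum.elim_inr] at hgi ⊢
  · exact hgi
  · linear_combination σ * hgi - (D *ᵥ g) i * hσ

theorem pathHam_apply (m : ℕ) (q : Fin m → ℝ) (j k : Fin m) :
    pathHam m q j k =
      (if (j : ℕ) + 1 = k ∨ (k : ℕ) + 1 = j then 1 else 0) + if j = k then q j else 0 := by
  simp [pathHam, pathAdj, diagonal_apply]

theorem pathHam_add_diagonal (m : ℕ) (q d : Fin m → ℝ) :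
    pathHam m q + diagonal d = pathHam m (q + d) := by
  rw [pathHam, pathHam, add_assoc, diagonal_add, Pi.add_def]

theorem pathHam_add_single_last (k : ℕ) (Q : ℕ → ℝ) (c : ℝ) :
    (pathHam (k + 1) fun i => Q i) + single (Fin.last k) (Fin.last k) c =
      pathHam (k + 1) fun i => Q i + if (i : ℕ) = k then c else 0 := by
  rw [← diagonal_single, pathHam_add_diagonal]
  congr
  funext i
  simp [Pi.single_apply, Fin.ext_iff]

theorem pathHam_eigenvector_head_ne_zero {m : ℕ} (hm : 0 < m) (q : Fin m → ℝ) {lam : ℝ}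
    {g : Fin m → ℝ} (hg : pathHam m q *ᵥ g = lam • g) (hne : g ≠ 0) : g ⟨0, hm⟩ ≠ 0 := by
  contrapose! hne
  suffices h : ∀ j (hj : j < m), g ⟨j, hj⟩ = 0 from funext fun j => h j j.isLt
  intro j
  induction j using Nat.strong_induction_on with
  | _ j ih =>
    intro hj
    cases j with
    | zero => exact hne
    | succ i =>
      -- in row `i`, every entry of `g` other than `g (i + 1)` is earlier or has coefficient 0
      have hrow := congrFun hg ⟨i, by omega⟩
      rw [mulVec, dotProduct, Finset.sum_eq_single ⟨i + 1, hj⟩] at hrow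
      · simpa [pathHam_apply, ih i (by omega)] using hrow
      · intro k _ hk
        have hk' : (k : ℕ) ≠ i + 1 := fun h => hk (Fin.ext h)
        rcases lt_or_gt_of_ne hk' with hlt | hgt
        · rw [ih k (by omega) k.isLt, mul_zero]
        · rw [pathHam_apply, if_neg (by simp only [not_or]; omega),
            if_neg (by simp only [Fin.ext_iff]; omega)]
          simp
      · simp

theorem pathCharFun_succ_add_ite (k : ℕ) (Q : ℕ → ℝ) (c x : ℝ) :
    pathCharFun (k + 1) (fun i => Q i + if i = k then c else 0) x =
      pathCharFun (k + 1) Q x - c * pathCharFun k Q x := by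
  have hminor : (x • 1 - pathHam (k + 1) fun i => Q i).submatrix Fin.castSucc Fin.castSucc =
      x • 1 - pathHam k fun i => Q i := by
    ext a b
    simp [pathHam_apply, one_apply]
  unfold pathCharFun
  rw [← pathHam_add_single_last, ← sub_sub, sub_eq_add_neg _ (single _ _ _), single_neg,
    det_add_single_self, adjugate_fin_succ_eq_det_submatrix, Fin.succAbove_last, hminor,
    ← two_mul, pow_mul]
  ring

theorem pathCharFun_succ_sub_ite (k : ℕ) (Q : ℕ → ℝ) (c x : ℝ) :
    pathCharFun (k + 1) (fun i => Q i - if i = k then c else 0) x =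
      pathCharFun (k + 1) Q x + c * pathCharFun k Q x := by
  have hneg : (fun i : ℕ => Q i - if i = k then c else 0) =
      fun i => Q i + if i = k then -c else 0 := by
    funext i
    split_ifs <;> ring
  rw [hneg, pathCharFun_succ_add_ite]
  ring

def foldEquiv (n : ℕ) : Fin n ⊕ Fin n ≃ Fin (2 * n) :=
  (Equiv.sumCongr (Equiv.refl _) Fin.revPerm).trans
    (finSumFinEquiv.trans (finCongr (two_mul n).symm))

@[simp]
theorem foldEquiv_inl_val {n : ℕ} (j : Fin n) : (foldEquiv n (Sum.inl j) : ℕ) = j := by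
  simp [foldEquiv]

@[simp]
theorem foldEquiv_inr_val {n : ℕ} (j : Fin n) :
    (foldEquiv n (Sum.inr j) : ℕ) = 2 * n - 1 - j := by
  simp only [foldEquiv, Equiv.trans_apply, Equiv.sumCongr_apply, Sum.map_inr, Fin.revPerm_apply,
    finSumFinEquiv_apply_right, finCongr_apply, Fin.val_cast, Fin.val_natAdd, Fin.val_rev]
  omega

theorem pathAdj_submatrix_foldEquiv (k : ℕ) :
    (pathAdj (2 * (k + 1))).submatrix (foldEquiv (k + 1)) (foldEquiv (k + 1)) =
      fromBlocks (pathAdj (k + 1)) (single (Fin.last k) (Fin.last k) 1)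
        (single (Fin.last k) (Fin.last k) 1) (pathAdj (k + 1)) := by
  ext (j | j) (l | l) <;>
    simp only [pathAdj, submatrix_apply, of_apply, foldEquiv_inl_val, foldEquiv_inr_val,
      fromBlocks_apply₁₁, fromBlocks_apply₁₂, fromBlocks_apply₂₁, fromBlocks_apply₂₂, single_apply,
      Fin.ext_iff, Fin.val_last] <;>
    split_ifs <;> first | rfl | omega

theorem pathHam_submatrix_foldEquiv (k : ℕ) (q : Fin (2 * (k + 1)) → ℝ) :
    (pathHam (2 * (k + 1)) q).submatrix (foldEquiv (k + 1)) (foldEquiv (k + 1)) =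
      fromBlocks (pathHam (k + 1) (q ∘ foldEquiv (k + 1) ∘ Sum.inl))
        (single (Fin.last k) (Fin.last k) 1) (single (Fin.last k) (Fin.last k) 1)
        (pathHam (k + 1) (q ∘ foldEquiv (k + 1) ∘ Sum.inr)) := by
  rw [pathHam, submatrix_add, Pi.add_apply, Pi.add_apply, pathAdj_submatrix_foldEquiv,
    submatrix_diagonal_equiv, ← Sum.elim_comp_inl_inr (q ∘ foldEquiv (k + 1)),
    ← fromBlocks_diagonal, fromBlocks_add]
  simp [pathHam]

def mirrorPotential (n : ℕ) (Q : ℕ → ℝ) (i : Fin (2 * n)) : ℝ :=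
  Q (min (i : ℕ) (2 * n - 1 - (i : ℕ)))

theorem pathHam_mirrorPotential_submatrix_foldEquiv (k : ℕ) (Q : ℕ → ℝ) :
    (pathHam (2 * (k + 1)) (mirrorPotential (k + 1) Q)).submatrix
        (foldEquiv (k + 1)) (foldEquiv (k + 1)) =
      fromBlocks (pathHam (k + 1) fun i => Q i) (single (Fin.last k) (Fin.last k) 1)
        (single (Fin.last k) (Fin.last k) 1) (pathHam (k + 1) fun i => Q i) := by
  rw [pathHam_submatrix_foldEquiv]
  congr 2 <;> funext j <;>
    simp only [mirrorPotential, Function.comp_apply, foldEquiv_inl_val, foldEquiv_inr_val] <;>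
    congr 1 <;> omega

theorem det_sub_pathHam_mirrorPotential (k : ℕ) (Q : ℕ → ℝ) (x : ℝ) :
    (x • (1 : Matrix (Fin (2 * (k + 1))) (Fin (2 * (k + 1))) ℝ) -
        pathHam (2 * (k + 1)) (mirrorPotential (k + 1) Q)).det =
      pathCharFun (k + 1) (fun i => Q i + if i = k then 1 else 0) x *
        pathCharFun (k + 1) (fun i => Q i - if i = k then 1 else 0) x := by
  have hminus : (fun i : ℕ => Q i - if i = k then 1 else 0) =
      fun i => Q i + if i = k then -1 else 0 := by
    funext i
    split_ifs <;> ring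
  rw [← det_submatrix_equiv_self (foldEquiv (k + 1))]
  simp only [submatrix_sub, submatrix_smul, Pi.sub_apply, Pi.smul_apply, submatrix_one_equiv]
  rw [pathHam_mirrorPotential_submatrix_foldEquiv, ← fromBlocks_one, fromBlocks_smul, smul_zero,
    sub_eq_add_neg (fromBlocks _ _ _ _), fromBlocks_neg, fromBlocks_add, zero_add,
    det_fromBlocks_self_swap, hminus, pathCharFun, pathCharFun, ← pathHam_add_single_last,
    ← pathHam_add_single_last, ← single_neg]
  congr 2 <;> abel

theorem exists_pathHam_mirrorPotential_eigenvector (k : ℕ) (Q : ℕ → ℝ) {σ lam : ℝ}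
    (hσ : σ * σ = 1)
    (hroot : pathCharFun (k + 1) (fun i => Q i + if i = k then σ else 0) lam = 0) :
    ∃ f : Fin (2 * (k + 1)) → ℝ,
      pathHam (2 * (k + 1)) (mirrorPotential (k + 1) Q) *ᵥ f = lam • f ∧
        f ⟨0, by omega⟩ = σ * f ⟨2 * (k + 1) - 1, by omega⟩ ∧ f ⟨0, by omega⟩ ≠ 0 := by
  have hpert : (pathHam (k + 1) fun i => Q i) + σ • single (Fin.last k) (Fin.last k) 1 =
      pathHam (k + 1) fun i => Q i + if (i : ℕ) = k then σ else 0 := by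
    rw [smul_single, smul_eq_mul, mul_one, pathHam_add_single_last]
  obtain ⟨g, hg0, hg⟩ := exists_mulVec_eq_zero_iff.mpr hroot
  rw [sub_mulVec, smul_mulVec, one_mulVec, sub_eq_zero, ← hpert] at hg
  have hhead := pathHam_eigenvector_head_ne_zero (Nat.succ_pos k) _ (hpert ▸ hg.symm) hg0
  have hblock := fromBlocks_mulVec_sum_elim_smul hσ hg.symm
  rw [← pathHam_mirrorPotential_submatrix_foldEquiv, submatrix_mulVec_equiv] at hblock
  have hfirst : (⟨0, by omega⟩ : Fin (2 * (k + 1))) = foldEquiv (k + 1) (Sum.inl 0) := by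
    ext
    simp
  have hlast : (⟨2 * (k + 1) - 1, by omega⟩ : Fin (2 * (k + 1))) =
      foldEquiv (k + 1) (Sum.inr 0) := by
    ext
    simp
  refine ⟨Sum.elim g (σ • g) ∘ (foldEquiv (k + 1)).symm, ?_, ?_, ?_⟩
  · funext i
    simpa using congrFun hblock ((foldEquiv (k + 1)).symm i)
  · simp [hfirst, hlast, ← mul_assoc, hσ]
  · simpa [hfirst] using hhead

/-- factorization of the characteristic polynomial of the path `P_{2n}` with
symmetric potential `(Q₁,…,Qₙ,Qₙ,…,Q₁)`, together with the symmetry of the eigenvectors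
corresponding to the roots of each factor. -/
theorem even_path_charpoly_factorization (n : ℕ) (hn : 1 ≤ n) (Q : ℕ → ℝ) :
    (∀ x : ℝ,
      (x • (1 : Matrix (Fin (2 * n)) (Fin (2 * n)) ℝ) -
          pathHam (2 * n) (fun i => Q (min (i : ℕ) (2 * n - 1 - (i : ℕ))))).det =
        pathCharFun n (fun i => Q i + if i = n - 1 then 1 else 0) x *
          pathCharFun n (fun i => Q i - if i = n - 1 then 1 else 0) x) ∧
    (∀ x : ℝ,
      (x • (1 : Matrix (Fin (2 * n)) (Fin (2 * n)) ℝ) -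
          pathHam (2 * n) (fun i => Q (min (i : ℕ) (2 * n - 1 - (i : ℕ))))).det =
        (pathCharFun n Q x + pathCharFun (n - 1) Q x) *
          (pathCharFun n Q x - pathCharFun (n - 1) Q x)) ∧
    (∀ lam : ℝ, pathCharFun n Q lam + pathCharFun (n - 1) Q lam = 0 →
      ∃ f : Fin (2 * n) → ℝ,
        (pathHam (2 * n) (fun i => Q (min (i : ℕ) (2 * n - 1 - (i : ℕ))))).mulVec f = lam • f ∧
        f ⟨0, by omega⟩ = - f ⟨2 * n - 1, by omega⟩ ∧ f ⟨0, by omega⟩ ≠ 0) ∧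
    (∀ lam : ℝ, pathCharFun n Q lam - pathCharFun (n - 1) Q lam = 0 →
      ∃ f : Fin (2 * n) → ℝ,
        (pathHam (2 * n) (fun i => Q (min (i : ℕ) (2 * n - 1 - (i : ℕ))))).mulVec f = lam • f ∧
        f ⟨0, by omega⟩ = f ⟨2 * n - 1, by omega⟩ ∧ f ⟨0, by omega⟩ ≠ 0) := by
  obtain ⟨k, rfl⟩ : ∃ k, n = k + 1 := ⟨n - 1, by omega⟩
  simp only [Nat.add_sub_cancel]
  refine ⟨det_sub_pathHam_mirrorPotential k Q, fun x => ?_, fun lam hlam => ?_, fun lam hlam => ?_⟩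
  · refine (det_sub_pathHam_mirrorPotential k Q x).trans ?_
    rw [pathCharFun_succ_add_ite, pathCharFun_succ_sub_ite]
    ring
  · obtain ⟨f, hf, hends, hhead⟩ := exists_pathHam_mirrorPotential_eigenvector k Q (σ := -1)
      (lam := lam) (by norm_num) (by rw [pathCharFun_succ_add_ite]; linarith)
    exact ⟨f, hf, by rw [hends, neg_one_mul], hhead⟩
  · obtain ⟨f, hf, hends, hhead⟩ := exists_pathHam_mirrorPotential_eigenvector k Q (σ := 1)
      (lam := lam) (by norm_num) (by rw [pathCharFun_succ_add_ite]; linarith)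
    exact ⟨f, hf, by rw [hends, one_mul], hhead⟩
end

section
/- Let n ≥ 2, let q = (Q_1,…,Q_n,Q_n,…,Q_1) be a symmetric potential on the path P_{2n}, and let H be the corresponding Hamiltonian. Suppose perfect state transfer occurs between the endpoints 1 and 2n at some time T ∈ ℝ, and suppose in addition that every eigenvalue of H is rational. Then every potential value Q_1,…,Q_n is rational. -/
open Matrix

/-!
Let `φ_k` be the characteristic polynomial of the first `k` vertices of the path. Expanding along
the last row gives `φ_{k+1} = (X - Q_{k+1}) φ_k - φ_{k-1}`. Cutting `P_{2n}` in the middle and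
using that the second half is the mirror image of the first gives
`φ_{2n} = φ_n² - φ_{n-1}² = φ_n⁺ φ_n⁻`, where `φ_n^± = φ_n ∓ φ_{n-1}` belongs to the half path
with `Q_n ± 1` at its last vertex. The roots of these Hermitian factors are eigenvalues of `H`,
hence rational, so `φ_n` and `φ_{n-1}` have rational coefficients. Comparing their traces gives
`Q_n ∈ ℚ`, the recurrence then gives `φ_{n-2} ∈ ℚ[X]`, and so on down the path.
-/

open Polynomial

theorem Matrix.det_succ_succ_of_tridiagonal_last {R : Type*} [CommRing R] {k : ℕ}
    (M : Matrix (Fin (k + 2)) (Fin (k + 2)) R)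
    (hrow : ∀ j : Fin k, M (Fin.last _) j.castSucc.castSucc = 0)
    (hcol : ∀ i : Fin k, M i.castSucc.castSucc (Fin.last _) = 0) :
    M.det = M (Fin.last _) (Fin.last _) * (M.submatrix Fin.castSucc Fin.castSucc).det
      - M (Fin.last _) (Fin.last k).castSucc * M (Fin.last k).castSucc (Fin.last _) *
        ((M.submatrix Fin.castSucc Fin.castSucc).submatrix Fin.castSucc Fin.castSucc).det := by
  have hsign : (-1 : R) ^ k * (-1) ^ k = 1 := by rw [← mul_pow]; simp
  -- the minor of the entry `(last, last - 1)` has a single nonzero entry in its last column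
  have hminor : (M.submatrix Fin.castSucc (Fin.last k).castSucc.succAbove).det =
      M (Fin.last k).castSucc (Fin.last _) *
        ((M.submatrix Fin.castSucc Fin.castSucc).submatrix Fin.castSucc Fin.castSucc).det := by
    rw [det_succ_column _ (Fin.last k), Fin.sum_univ_castSucc, Finset.sum_eq_zero]
    · simp [Fin.succAbove_last, Fin.succAbove_castSucc_of_lt, Function.comp_def, pow_add, hsign]
    · intro i _
      simp [hcol]
  rw [det_succ_row _ (Fin.last _), Fin.sum_univ_castSucc, Fin.sum_univ_castSucc,
    Finset.sum_eq_zero fun j _ => by simp [hrow]]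
  simp only [Fin.val_last, Fin.val_castSucc, pow_add, pow_one, mul_neg, mul_one, neg_mul, hsign,
    one_mul, Fin.succAbove_last, hminor, neg_neg]
  ring

theorem Matrix.charmatrix_submatrix {m n R : Type*} [CommRing R] [Fintype m] [Fintype n]
    [DecidableEq m] [DecidableEq n]
    (M : Matrix n n R) {e : m → n} (he : Function.Injective e) :
    charmatrix (M.submatrix e e) = (charmatrix M).submatrix e e := by
  ext i j
  simp [charmatrix_apply, diagonal_apply, he.eq_iff]

theorem Matrix.exists_mulVec_eq_smul_of_isRoot_charpoly {K n : Type*} [Field K] [Fintype n]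
    [DecidableEq n] {A : Matrix n n K} {μ : K} (hμ : A.charpoly.IsRoot μ) :
    ∃ v, v ≠ 0 ∧ A *ᵥ v = μ • v := by
  rw [← Matrix.charpoly_toLin', ← Module.End.hasEigenvalue_iff_isRoot_charpoly] at hμ
  obtain ⟨v, hv⟩ := hμ.exists_hasEigenvector
  exact ⟨v, hv.2, by simpa using hv.apply_eq_smul⟩

section

variable {R S : Type*} [Ring R] [Ring S] {f : R →+* S}

theorem Polynomial.X_sub_C_mem_liftsRing {r : S} (hr : r ∈ f.range) :
    X - C r ∈ liftsRing f := by
  obtain ⟨s, rfl⟩ := hr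
  exact sub_mem ((lifts_iff_liftsRing _ _).mp (X_mem_lifts f))
    ((lifts_iff_liftsRing _ _).mp (C_mem_lifts f s))

theorem Polynomial.coeff_mem_range_of_mem_liftsRing {p : S[X]} (hp : p ∈ liftsRing f) (n : ℕ) :
    p.coeff n ∈ f.range :=
  (lifts_iff_coeff_lifts p).mp ((lifts_iff_liftsRing _ _).mpr hp) n

end

theorem Matrix.IsHermitian.charpoly_mem_liftsRing {R n : Type*} [Ring R] [Fintype n]
    [DecidableEq n] {f : R →+* ℝ} {A : Matrix n n ℝ} (hA : A.IsHermitian)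
    (hroots : ∀ μ, A.charpoly.IsRoot μ → μ ∈ f.range) : A.charpoly ∈ liftsRing f := by
  have hcharpoly := hA.charpoly_eq
  simp only [RCLike.ofReal_real_eq_id, id] at hcharpoly
  rw [hcharpoly]
  refine Subring.prod_mem _ fun i _ => ?_
  exact X_sub_C_mem_liftsRing <| hroots (hA.eigenvalues i) <| by
    rw [hcharpoly, isRoot_prod]
    exact ⟨i, Finset.mem_univ _, root_X_sub_C.mpr rfl⟩

theorem pathHam_apply_self {m : ℕ} (q : Fin m → ℝ) (i : Fin m) : pathHam m q i i = q i := by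
  simp [pathHam, pathAdj]

theorem pathHam_apply_of_ne {m : ℕ} (q : Fin m → ℝ) {i j : Fin m} (h : i ≠ j) :
    pathHam m q i j = if (i : ℕ) + 1 = j ∨ (j : ℕ) + 1 = i then 1 else 0 := by
  simp [pathHam, pathAdj, h]

theorem pathHam_isHermitian (m : ℕ) (q : Fin m → ℝ) : (pathHam m q).IsHermitian := by
  ext i j
  by_cases h : i = j <;> simp [pathHam, pathAdj, h, eq_comm, or_comm]

-- The potential is a sequence so that all leading principal blocks of one path share it.
noncomputable def pathCharpoly (Q : ℕ → ℝ) (m : ℕ) : ℝ[X] :=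
  (pathHam m fun i => Q i).charpoly

theorem pathCharpoly_zero (Q : ℕ → ℝ) : pathCharpoly Q 0 = 1 :=
  charpoly_isEmpty

theorem pathCharpoly_one (Q : ℕ → ℝ) : pathCharpoly Q 1 = X - C (Q 0) := by
  rw [pathCharpoly, Matrix.charpoly, det_unique, charmatrix_apply_eq, pathHam_apply_self]
  rfl

theorem pathCharpoly_congr {Q Q' : ℕ → ℝ} {m : ℕ} (h : ∀ i < m, Q i = Q' i) :
    pathCharpoly Q m = pathCharpoly Q' m := by
  have : (fun i : Fin m => Q i) = fun i : Fin m => Q' i := funext fun i => h i i.isLt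
  rw [pathCharpoly, pathCharpoly, this]

theorem pathHam_submatrix_castSucc (Q : ℕ → ℝ) (m : ℕ) :
    (pathHam (m + 1) fun i => Q i).submatrix Fin.castSucc Fin.castSucc =
      pathHam m fun i => Q i := by
  ext i j
  simp [pathHam, pathAdj, diagonal_apply, Fin.castSucc_inj]

theorem pathCharpoly_succ_succ (Q : ℕ → ℝ) (m : ℕ) :
    pathCharpoly Q (m + 2) = (X - C (Q (m + 1))) * pathCharpoly Q (m + 1) - pathCharpoly Q m := by
  have hne : Fin.last (m + 1) ≠ (Fin.last m).castSucc := (Fin.castSucc_lt_last _).ne'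
  rw [pathCharpoly, Matrix.charpoly, det_succ_succ_of_tridiagonal_last, charmatrix_apply_eq,
    charmatrix_apply_ne _ _ _ hne, charmatrix_apply_ne _ _ _ hne.symm,
    pathHam_apply_of_ne _ hne, pathHam_apply_of_ne _ hne.symm, pathHam_apply_self]
  · simp only [← charmatrix_submatrix _ (Fin.castSucc_injective _), pathHam_submatrix_castSucc]
    simp [pathCharpoly, Matrix.charpoly]
  · intro j
    have hj : Fin.last (m + 1) ≠ j.castSucc.castSucc := (Fin.castSucc_lt_last _).ne'
    rw [charmatrix_apply_ne _ _ _ hj, pathHam_apply_of_ne _ hj, if_neg, map_zero, neg_zero]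
    simp only [Fin.val_last, Fin.val_castSucc]
    omega
  · intro i
    have hi : i.castSucc.castSucc ≠ Fin.last (m + 1) := (Fin.castSucc_lt_last _).ne
    rw [charmatrix_apply_ne _ _ _ hi, pathHam_apply_of_ne _ hi, if_neg, map_zero, neg_zero]
    simp only [Fin.val_last, Fin.val_castSucc]
    omega

theorem pathCharpoly_add_single (Q : ℕ → ℝ) (m : ℕ) (ε : ℝ) :
    pathCharpoly (Q + Pi.single m ε) (m + 1) =
      pathCharpoly Q (m + 1) - C ε * pathCharpoly Q m := by
  have hbelow : ∀ k ≤ m, pathCharpoly (Q + Pi.single m ε) k = pathCharpoly Q k := fun k hk =>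
    pathCharpoly_congr fun i hi => by simp [(hi.trans_le hk).ne]
  cases m with
  | zero =>
    simp only [zero_add, pathCharpoly_one, Pi.add_apply, Pi.single_eq_same, map_add,
      pathCharpoly_zero]
    ring
  | succ k =>
    rw [pathCharpoly_succ_succ, pathCharpoly_succ_succ, hbelow _ le_rfl, hbelow _ k.le_succ]
    simp only [Pi.add_apply, Pi.single_eq_same, map_add]
    ring

theorem pathCharpoly_coeff (Q : ℕ → ℝ) (m : ℕ) :
    (pathCharpoly Q (m + 1)).coeff m = -∑ i ∈ Finset.range (m + 1), Q i := by
  have htrace := trace_eq_neg_charpoly_coeff (pathHam (m + 1) fun i => Q i)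
  simp only [Fintype.card_fin, add_tsub_cancel_right, trace, diag, pathHam_apply_self,
    Fin.sum_univ_eq_sum_range Q] at htrace
  rw [pathCharpoly, htrace, neg_neg]

theorem pathCharpoly_eq_of_reflect {Q Q' : ℕ → ℝ} {m : ℕ}
    (h : ∀ i j, i + j + 1 = m → Q' i = Q j) :
    pathCharpoly Q' m = pathCharpoly Q m := by
  rw [pathCharpoly, pathCharpoly, ← charpoly_reindex Fin.revPerm]
  congr 1
  ext i j
  have hi := i.isLt
  have hj := j.isLt
  simp only [pathHam, pathAdj, reindex_apply, Fin.revPerm_symm, submatrix_apply, Fin.revPerm_apply,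
    Matrix.add_apply, of_apply, Fin.val_rev, diagonal_apply, Fin.rev_inj]
  rw [h _ i (by omega)]
  congr 1
  exact if_congr (by omega) rfl rfl

theorem pathCharpoly_add_add_two (Q : ℕ → ℝ) (a b : ℕ) :
    pathCharpoly Q (a + b + 2) =
      pathCharpoly Q (a + 1) * pathCharpoly (fun i => Q (a + 1 + i)) (b + 1)
        - pathCharpoly Q a * pathCharpoly (fun i => Q (a + 2 + i)) b := by
  have hφ (b : ℕ) : pathCharpoly Q (a + b + 3) =
      (X - C (Q (a + b + 2))) * pathCharpoly Q (a + b + 2) - pathCharpoly Q (a + b + 1) :=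
    pathCharpoly_succ_succ Q (a + b + 1)
  have hψ (b : ℕ) : pathCharpoly (fun i => Q (a + 1 + i)) (b + 2) =
      (X - C (Q (a + b + 2))) * pathCharpoly (fun i => Q (a + 1 + i)) (b + 1)
        - pathCharpoly (fun i => Q (a + 1 + i)) b := by
    rw [pathCharpoly_succ_succ, show a + 1 + (b + 1) = a + b + 2 by ring]
  have hψ' (b : ℕ) : pathCharpoly (fun i => Q (a + 2 + i)) (b + 2) =
      (X - C (Q (a + b + 3))) * pathCharpoly (fun i => Q (a + 2 + i)) (b + 1)
        - pathCharpoly (fun i => Q (a + 2 + i)) b := by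
    rw [pathCharpoly_succ_succ, show a + 2 + (b + 1) = a + b + 3 by ring]
  induction b using Nat.twoStepInduction with
  | zero =>
    rw [pathCharpoly_succ_succ, pathCharpoly_one, pathCharpoly_zero, add_zero]
    ring
  | one =>
    have hψ₀ := hψ 0
    simp only [zero_add, pathCharpoly_zero, pathCharpoly_one, add_zero] at hψ₀ ⊢
    linear_combination hφ 0 + (X - C (Q (a + 2))) * pathCharpoly_succ_succ Q a
      - pathCharpoly Q (a + 1) * hψ₀
  | more b ih₀ ih₁ =>
    linear_combination hφ (b + 1) + (X - C (Q (a + b + 3))) * ih₁ - ih₀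
      - pathCharpoly Q (a + 1) * hψ (b + 1) + pathCharpoly Q a * hψ' b

theorem pathCharpoly_two_mul_of_symm {Q : ℕ → ℝ} {m : ℕ}
    (hQ : ∀ i j, i + j + 1 = 2 * (m + 1) → Q i = Q j) :
    pathCharpoly Q (2 * (m + 1)) =
      pathCharpoly (Q + Pi.single m 1) (m + 1) * pathCharpoly (Q + Pi.single m (-1)) (m + 1) := by
  have hsplit := pathCharpoly_add_add_two Q m m
  have hright : pathCharpoly (fun i => Q (m + 1 + i)) (m + 1) = pathCharpoly Q (m + 1) :=
    pathCharpoly_eq_of_reflect fun i j h => hQ _ _ (by omega)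
  have hright' : pathCharpoly (fun i => Q (m + 2 + i)) m = pathCharpoly Q m :=
    pathCharpoly_eq_of_reflect fun i j h => hQ _ _ (by omega)
  rw [hright, hright'] at hsplit
  rw [pathCharpoly_add_single, pathCharpoly_add_single, show 2 * (m + 1) = m + m + 2 by ring,
    hsplit]
  simp only [map_one, map_neg]
  ring

section

variable {R : Type*} [Ring R] {f : R →+* ℝ}

theorem sum_range_mem_of_pathCharpoly_mem_liftsRing {Q : ℕ → ℝ} {m : ℕ}
    (h : pathCharpoly Q (m + 1) ∈ liftsRing f) :
    ∑ i ∈ Finset.range (m + 1), Q i ∈ f.range := by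
  simpa [pathCharpoly_coeff] using coeff_mem_range_of_mem_liftsRing h m

theorem mem_range_of_pathCharpoly_mem_liftsRing {Q : ℕ → ℝ} {m : ℕ}
    (h₁ : pathCharpoly Q (m + 1) ∈ liftsRing f) (h₀ : pathCharpoly Q m ∈ liftsRing f) :
    ∀ i ≤ m, Q i ∈ f.range := by
  induction m with
  | zero =>
    intro i hi
    simpa [Nat.le_zero.mp hi] using sum_range_mem_of_pathCharpoly_mem_liftsRing h₁
  | succ m ih =>
    have hlast : Q (m + 1) ∈ f.range := by
      have h := sub_mem (sum_range_mem_of_pathCharpoly_mem_liftsRing h₁)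
        (sum_range_mem_of_pathCharpoly_mem_liftsRing h₀)
      rwa [Finset.sum_range_succ _ (m + 1), add_sub_cancel_left] at h
    have h₀' : pathCharpoly Q m ∈ liftsRing f := by
      have h := sub_mem (mul_mem (X_sub_C_mem_liftsRing hlast) h₀) h₁
      rwa [pathCharpoly_succ_succ, sub_sub_cancel] at h
    intro i hi
    rcases hi.lt_or_eq with hi | rfl
    · exact ih h₀ h₀' i (Nat.lt_succ_iff.mp hi)
    · exact hlast

end

theorem pathCharpoly_mem_liftsRing_of_symm {K : Type*} [Field K] {f : K →+* ℝ}
    {Q : ℕ → ℝ} {m : ℕ}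
    (hQ : ∀ i j, i + j + 1 = 2 * (m + 1) → Q i = Q j)
    (hroots : ∀ μ, (pathCharpoly Q (2 * (m + 1))).IsRoot μ → μ ∈ f.range) :
    pathCharpoly Q (m + 1) ∈ liftsRing f ∧ pathCharpoly Q m ∈ liftsRing f := by
  have hfactor (ε : ℝ)
      (hdvd : pathCharpoly (Q + Pi.single m ε) (m + 1) ∣ pathCharpoly Q (2 * (m + 1))) :
      pathCharpoly (Q + Pi.single m ε) (m + 1) ∈ liftsRing f := by
    rw [pathCharpoly] at hdvd ⊢
    exact (pathHam_isHermitian _ _).charpoly_mem_liftsRing fun μ hμ => hroots μ (hμ.dvd hdvd)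
  have hplus := hfactor 1 (by rw [pathCharpoly_two_mul_of_symm hQ]; exact dvd_mul_right _ _)
  have hminus := hfactor (-1) (by rw [pathCharpoly_two_mul_of_symm hQ]; exact dvd_mul_left _ _)
  have hhalf : C (1 / 2 : ℝ) ∈ liftsRing f := by
    simpa [map_ofNat] using (lifts_iff_liftsRing _ _).mp (C_mem_lifts f (1 / 2))
  have htwo : C (1 / 2 : ℝ) * 2 = 1 := by
    rw [← C_ofNat, ← C_mul]; norm_num
  rw [pathCharpoly_add_single] at hplus hminus
  simp only [map_one, map_neg, one_mul, neg_mul, sub_neg_eq_add] at hplus hminus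
  constructor
  · convert mul_mem hhalf (add_mem hplus hminus) using 1
    linear_combination (-pathCharpoly Q (m + 1)) * htwo
  · convert mul_mem hhalf (sub_mem hminus hplus) using 1
    linear_combination (-pathCharpoly Q m) * htwo

theorem mem_range_of_symm_of_isRoot_pathCharpoly {K : Type*} [Field K] {f : K →+* ℝ}
    {Q : ℕ → ℝ} {m : ℕ} (hQ : ∀ i j, i + j + 1 = 2 * (m + 1) → Q i = Q j)
    (hroots : ∀ μ, (pathCharpoly Q (2 * (m + 1))).IsRoot μ → μ ∈ f.range) :
    ∀ i < 2 * (m + 1), Q i ∈ f.range := by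
  obtain ⟨h₁, h₀⟩ := pathCharpoly_mem_liftsRing_of_symm hQ hroots
  intro i hi
  rcases le_or_gt i m with him | him
  · exact mem_range_of_pathCharpoly_mem_liftsRing h₁ h₀ i him
  · rw [hQ i (2 * m + 1 - i) (by omega)]
    exact mem_range_of_pathCharpoly_mem_liftsRing h₁ h₀ _ (by omega)

/-- if perfect state transfer occurs between the endpoints of an even path with
symmetric potential and all eigenvalues of the Hamiltonian are rational, then all the
potential values are rational. -/
theorem potential_rational_of_rational_eigenvalues (n : ℕ)
    (q : Fin (2 * n) → ℝ)
    (hsym : ∀ i j : Fin (2 * n), (i : ℕ) + (j : ℕ) = 2 * n - 1 → q i = q j)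
    (hrat : ∀ lam : ℝ,
      (∃ x : Fin (2 * n) → ℝ, x ≠ 0 ∧ (pathHam (2 * n) q).mulVec x = lam • x) →
      ∃ r : ℚ, lam = (r : ℝ)) :
    ∀ i : Fin (2 * n), ∃ r : ℚ, q i = (r : ℝ) := by
  intro i
  obtain ⟨m, rfl⟩ : ∃ m, n = m + 1 := Nat.exists_eq_add_one.mpr (by have := i.isLt; omega)
  set Q : ℕ → ℝ := fun j => if h : j < 2 * (m + 1) then q ⟨j, h⟩ else 0
  have hQq : (fun j : Fin (2 * (m + 1)) => Q j) = q := funext fun j => dif_pos j.isLt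
  have hQ : ∀ j k, j + k + 1 = 2 * (m + 1) → Q j = Q k := fun j k h => by
    simp only [Q, dif_pos (show j < 2 * (m + 1) by omega), dif_pos (show k < 2 * (m + 1) by omega)]
    exact hsym _ _ (by dsimp only; omega)
  have hroots (μ : ℝ) (hμ : (pathCharpoly Q (2 * (m + 1))).IsRoot μ) :
      μ ∈ (Rat.castHom ℝ).range := by
    rw [pathCharpoly, hQq] at hμ
    obtain ⟨r, hr⟩ := hrat μ (exists_mulVec_eq_smul_of_isRoot_charpoly hμ)
    exact ⟨r, hr.symm⟩
  obtain ⟨r, hr⟩ := mem_range_of_symm_of_isRoot_pathCharpoly hQ hroots i i.isLt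
  exact ⟨r, (congrFun hQq i).symm.trans hr.symm⟩
end
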